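/- Let c₁ ∈ (0, 1), c₂ ∈ (0, 1/10), c₃ ∈ (0, 1) be constants. Let H be a d×d complex Hermitian matrix with 0 ⪯ H ⪯ I whose smallest eigenvalue is g, and let ε > 0 satisfy g ≤ c₁ε. Let Π_{g+ε} be the spectral projector of H onto eigenvalues at most g + ε, and let σ be a d×d density matrix with tr(Π_{g+ε} σ) ≥ c₂. Set β = 3·ln(1+c₂)/(c₃ε), c₄ = e^{−6(1+c₁)ln(1+c₂)/c₃}·c₂/2, γ = c₃c₄/40, and σ(β) = e^{−βH} σ e^{−βH}. Then tr(σ(β)) − 4γ ≥ c₄. -/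

import Mathlib

/-!
The Loewner inequality `e^{-2β(g+ε)} Π_{g+ε} ⪯ e^{-2βH}` (compare the two functions of `H`
pointwise on the spectrum) and monotonicity of `A ↦ re tr(A σ)` for `σ ⪰ 0` give
`tr(e^{-βH} σ e^{-βH}) ≥ e^{-2β(g+ε)} c₂ ≥ e^{-2β(1+c₁)ε} c₂ = 2 c₄`, while `4γ = c₃ c₄ / 10 ≤ c₄`.
-/

open Matrix
open scoped ComplexOrder

/-- The matrix exponential of a complex square matrix. -/
noncomputable def mexp {d : ℕ} (A : Matrix (Fin d) (Fin d) ℂ) : Matrix (Fin d) (Fin d) ℂ :=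
  NormedSpace.exp A

/-- The spectral projector of a Hermitian matrix onto the span of its eigenvectors
with eigenvalue at most `E`. -/
noncomputable def spectralProj {d : ℕ} {H : Matrix (Fin d) (Fin d) ℂ}
    (hH : H.IsHermitian) (E : ℝ) : Matrix (Fin d) (Fin d) ℂ :=
  (hH.eigenvectorUnitary : Matrix (Fin d) (Fin d) ℂ) *
    Matrix.diagonal (fun i => if hH.eigenvalues i ≤ E then (1 : ℂ) else 0) *
    star (hH.eigenvectorUnitary : Matrix (Fin d) (Fin d) ℂ)

open scoped MatrixOrder

namespace Matrix

variable {n : Type*} [Fintype n]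

lemma PosSemidef.trace_mul_nonneg {𝕜 : Type*} [RCLike 𝕜] {A B : Matrix n n 𝕜} (hA : A.PosSemidef) (hB : B.PosSemidef) :
    0 ≤ (A * B).trace := by
  classical
  obtain ⟨X, rfl⟩ := CStarAlgebra.nonneg_iff_eq_star_mul_self.mp hA.nonneg
  rw [mul_assoc, trace_mul_comm, mul_assoc, star_eq_conjTranspose, ← mul_assoc]
  exact (hB.mul_mul_conjTranspose_same X).trace_nonneg

lemma re_trace_mul_le_re_trace_mul {A B σ : Matrix n n ℂ} (hAB : A ≤ B) (hσ : σ.PosSemidef) :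
    (A * σ).trace.re ≤ (B * σ).trace.re := by
  have := (Complex.le_def.mp ((le_iff.mp hAB).trace_mul_nonneg hσ)).1
  simpa [sub_mul, trace_sub] using this

end Matrix

section SpectralCalculus

variable {d : ℕ} {H : Matrix (Fin d) (Fin d) ℂ}

lemma spectralProj_eq_cfc (hH : H.IsHermitian) (E : ℝ) :
    spectralProj hH E = cfc (fun x => if x ≤ E then 1 else 0) H := by
  rw [hH.cfc_eq, Matrix.IsHermitian.cfc, Unitary.conjStarAlgAut_apply, spectralProj]
  congr
  ext i
  split_ifs <;> simp [*]

lemma mexp_cfc (hH : H.IsHermitian) (f : ℝ → ℝ) :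
    mexp (cfc f H) = cfc (Real.exp ∘ f) H := by
  set U : Matrix (Fin d) (Fin d) ℂ := (hH.eigenvectorUnitary : Matrix (Fin d) (Fin d) ℂ)
  have hUinv : U⁻¹ = star U := Matrix.inv_eq_left_inv (Unitary.coe_star_mul_self _)
  rw [hH.cfc_eq, hH.cfc_eq, Matrix.IsHermitian.cfc, Matrix.IsHermitian.cfc,
    Unitary.conjStarAlgAut_apply, Unitary.conjStarAlgAut_apply, mexp, ← hUinv,
    Matrix.exp_conj _ _ Unitary.isUnit_coe, Matrix.exp_diagonal]
  congr
  ext i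
  simp [Complex.exp_eq_exp_ℂ]

lemma mexp_neg_smul (hH : H.IsHermitian) (β : ℝ) :
    mexp (-((β : ℂ) • H)) = cfc (fun x => Real.exp (-(β * x))) H := by
  have : -((β : ℂ) • H) = cfc (fun x => -(β * x)) H := by
    rw [cfc_neg, cfc_const_mul_id β H hH.isSelfAdjoint, Complex.coe_smul]
  rw [this, mexp_cfc hH]
  rfl

lemma exp_mul_re_trace_spectralProj_mul_le (hH : H.IsHermitian) {σ : Matrix (Fin d) (Fin d) ℂ}
    (hσ : σ.PosSemidef) {β : ℝ} (hβ : 0 ≤ β) (E : ℝ) :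
    Real.exp (-(2 * β * E)) * (spectralProj hH E * σ).trace.re ≤
      (mexp (-((β : ℂ) • H)) * σ * mexp (-((β : ℂ) • H))).trace.re := by
  have hfin := (spectrum ℝ H).toFinite
  have hsmul (c : ℝ) (A : Matrix (Fin d) (Fin d) ℂ) :
      c * (A * σ).trace.re = (c • A * σ).trace.re := by
    simp [Matrix.trace_smul]
  rw [Matrix.trace_mul_cycle, mexp_neg_smul hH,
    ← cfc_mul _ _ H (hfin.continuousOn _) (hfin.continuousOn _), spectralProj_eq_cfc hH, hsmul,
    ← cfc_const_mul _ _ H (hfin.continuousOn _)]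
  refine Matrix.re_trace_mul_le_re_trace_mul (cfc_mono (hf := hfin.continuousOn _) fun x _ => ?_) hσ
  rw [← Real.exp_add]
  split_ifs with hx
  · rw [mul_one, Real.exp_le_exp]
    nlinarith
  · rw [mul_zero]
    positivity

end SpectralCalculus

theorem qal_constant_success_probability_general {d : ℕ} (c₁ c₂ c₃ : ℝ)
    (hc₂ : c₂ ∈ Set.Ioo (0 : ℝ) (1 / 10))
    (hc₃ : c₃ ∈ Set.Ioo (0 : ℝ) 1)
    (H : Matrix (Fin d) (Fin d) ℂ)
    (hH : H.IsHermitian)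
    (g : ℝ)
    (ε : ℝ) (hε : 0 < ε) (hgε : g ≤ c₁ * ε)
    (σ : Matrix (Fin d) (Fin d) ℂ) (hσ : σ.PosSemidef)
    (hover : c₂ ≤ (spectralProj hH (g + ε) * σ).trace.re)
    (β c₄ γ : ℝ)
    (hβ : β = 3 * Real.log (1 + c₂) / (c₃ * ε))
    (hc₄ : c₄ = Real.exp (-(6 * (1 + c₁) * Real.log (1 + c₂) / c₃)) * c₂ / 2)
    (hγ : γ = c₃ * c₄ / 40) :
    c₄ ≤ (mexp (-((β : ℂ) • H)) * σ * mexp (-((β : ℂ) • H))).trace.re - 4 * γ := by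
  obtain ⟨hc₂0, -⟩ := hc₂
  obtain ⟨hc₃0, hc₃1⟩ := hc₃
  have hβ0 : 0 ≤ β := by
    have : 0 < Real.log (1 + c₂) := Real.log_pos (by linarith)
    rw [hβ]; positivity
  have hweight : Real.exp (-(6 * (1 + c₁) * Real.log (1 + c₂) / c₃)) ≤
      Real.exp (-(2 * β * (g + ε))) := by
    have : 2 * β * ((1 + c₁) * ε) = 6 * (1 + c₁) * Real.log (1 + c₂) / c₃ := by
      rw [hβ]; field_simp; ring
    rw [Real.exp_le_exp, ← this]
    gcongr
    linarith
  have hsuccess := (mul_le_mul_of_nonneg_left hover (Real.exp_pos _).le).trans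
    (exp_mul_re_trace_spectralProj_mul_le hH hσ hβ0 (g + ε))
  have hc₄0 : 0 ≤ c₄ := by rw [hc₄]; positivity
  have h2c₄ : 2 * c₄ ≤ Real.exp (-(2 * β * (g + ε))) * c₂ := by
    rw [hc₄]; linarith [mul_le_mul_of_nonneg_right hweight hc₂0.le]
  have hγc₄ : 4 * γ ≤ c₄ := by
    rw [hγ]; linarith [mul_le_mul_of_nonneg_right hc₃1.le hc₄0]
  linarith

/-- Theorem S3, success-probability part: with the paper's choice of `β`, `c₄`, `γ`,
the success probability of post-selection satisfies `tr(σ(β)) − 4γ ≥ c₄`. -/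
theorem qal_constant_success_probability {d : ℕ} (c₁ c₂ c₃ : ℝ)
    (hc₁ : c₁ ∈ Set.Ioo (0 : ℝ) 1) (hc₂ : c₂ ∈ Set.Ioo (0 : ℝ) (1 / 10))
    (hc₃ : c₃ ∈ Set.Ioo (0 : ℝ) 1)
    (H : Matrix (Fin d) (Fin d) ℂ)
    (hH : H.IsHermitian) (hH0 : H.PosSemidef) (hH1 : (1 - H).PosSemidef)
    (g : ℝ) (hg : IsLeast (Set.range hH.eigenvalues) g)
    (ε : ℝ) (hε : 0 < ε) (hgε : g ≤ c₁ * ε)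
    (σ : Matrix (Fin d) (Fin d) ℂ) (hσ : σ.PosSemidef) (hσtr : σ.trace = 1)
    (hover : c₂ ≤ (spectralProj hH (g + ε) * σ).trace.re)
    (β c₄ γ : ℝ)
    (hβ : β = 3 * Real.log (1 + c₂) / (c₃ * ε))
    (hc₄ : c₄ = Real.exp (-(6 * (1 + c₁) * Real.log (1 + c₂) / c₃)) * c₂ / 2)
    (hγ : γ = c₃ * c₄ / 40) :
    c₄ ≤ (mexp (-((β : ℂ) • H)) * σ * mexp (-((β : ℂ) • H))).trace.re - 4 * γ :=
  qal_constant_success_probability_general c₁ c₂ c₃ hc₂ hc₃ H hH g ε hε hgε σ hσ hover β c₄ γ hβ hc₄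
    hγ
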